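/- Let W and W⁻¹ be mutually inverse causal formal power series with matrix coefficients (W·W⁻¹ = W⁻¹·W = I) whose leading coefficients are invertible. For a formal power series V supported on degrees 1..N and G = P_{1..N}(W_L^{-1} V W_R^{-1}) (truncation to degrees 1..N), one has V = P_{1..N}(W_L G W_R). In particular, the linear map V ↦ G is a bijection of the space of degree-(1..N) supported series onto itself. -/
import Mathlib


open Finset

/-- Cauchy product of coefficient sequences of formal power series in `z⁻¹`
with (rectangular) matrix coefficients. -/
noncomputable def fpsMul {p q r : ℕ} (B : ℕ → Matrix (Fin p) (Fin q) ℂ)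
    (A : ℕ → Matrix (Fin q) (Fin r) ℂ) : ℕ → Matrix (Fin p) (Fin r) ℂ :=
  fun i => ∑ j ∈ Finset.range (i + 1), B j * A (i - j)

/-- The identity formal power series. -/
noncomputable def fpsOne (n : ℕ) : ℕ → Matrix (Fin n) (Fin n) ℂ :=
  fun i => if i = 0 then 1 else 0

/-- Coefficient-wise truncation to degrees `1..N`. -/
noncomputable def trunc {p q : ℕ} (N : ℕ) (f : ℕ → Matrix (Fin p) (Fin q) ℂ) :
    ℕ → Matrix (Fin p) (Fin q) ℂ :=
  fun i => if 1 ≤ i ∧ i ≤ N then f i else 0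

lemma fpsMul_assoc {p q r s : ℕ} (A : ℕ → Matrix (Fin p) (Fin q) ℂ)
    (B : ℕ → Matrix (Fin q) (Fin r) ℂ) (C : ℕ → Matrix (Fin r) (Fin s) ℂ) :
    fpsMul (fpsMul A B) C = fpsMul A (fpsMul B C) := by
  funext i
  simp only [fpsMul, Matrix.sum_mul, Matrix.mul_sum]
  rw [Finset.sum_sigma', Finset.sum_sigma']
  apply Finset.sum_nbij' (i := fun x => (⟨x.2, x.1 - x.2⟩ : (_ : ℕ) × ℕ))
    (j := fun x => (⟨x.1 + x.2, x.1⟩ : (_ : ℕ) × ℕ))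
  all_goals rintro ⟨a, b⟩ h; simp only [Finset.mem_sigma, Finset.mem_range] at h ⊢
  · omega
  · omega
  · have : b + (a - b) = a := by omega
    rw [this]
  · have : a + b - a = b := by omega
    rw [this]
  · have : i - b - (a - b) = i - a := by omega
    rw [this, Matrix.mul_assoc]

lemma one_fpsMul {p q : ℕ} (A : ℕ → Matrix (Fin p) (Fin q) ℂ) :
    fpsMul (fpsOne p) A = A := by
  funext i
  unfold fpsMul fpsOne
  rw [Finset.sum_eq_single 0]
  · simp
  · intro j hj hj0; simp [hj0]
  · intro h; simp at h

lemma fpsMul_one {p q : ℕ} (A : ℕ → Matrix (Fin p) (Fin q) ℂ) :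
    fpsMul A (fpsOne q) = A := by
  funext i
  unfold fpsMul fpsOne
  rw [Finset.sum_eq_single i]
  · simp
  · intro j hj hj0
    simp only [Finset.mem_range] at hj
    have : ¬ (i - j = 0) := by omega
    simp [this]
  · intro h; simp at h

lemma fpsMul_congr_right {p q r : ℕ} (B : ℕ → Matrix (Fin p) (Fin q) ℂ)
    {f g : ℕ → Matrix (Fin q) (Fin r) ℂ} {i : ℕ} (h : ∀ j ≤ i, f j = g j) :
    fpsMul B f i = fpsMul B g i := by
  unfold fpsMul
  apply Finset.sum_congr rfl
  intro j hj
  rw [h (i - j) (by omega)]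

lemma fpsMul_congr_left {p q r : ℕ} (C : ℕ → Matrix (Fin q) (Fin r) ℂ)
    {f g : ℕ → Matrix (Fin p) (Fin q) ℂ} {i : ℕ} (h : ∀ j ≤ i, f j = g j) :
    fpsMul f C i = fpsMul g C i := by
  unfold fpsMul
  apply Finset.sum_congr rfl
  intro j hj
  simp only [Finset.mem_range] at hj
  rw [h j (by omega)]

lemma key {p q N : ℕ}
    (WL WLinv : ℕ → Matrix (Fin p) (Fin p) ℂ)
    (WR WRinv : ℕ → Matrix (Fin q) (Fin q) ℂ)
    (hL1 : fpsMul WL WLinv = fpsOne p) (hR2 : fpsMul WRinv WR = fpsOne q)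
    (V : ℕ → Matrix (Fin p) (Fin q) ℂ)
    (hV0 : V 0 = 0) (hVN : ∀ i, N < i → V i = 0) :
    V = trunc N (fpsMul (fpsMul WL (trunc N (fpsMul (fpsMul WLinv V) WRinv))) WR) := by
  set X := fpsMul (fpsMul WLinv V) WRinv with hX
  have hX0 : X 0 = 0 := by
    simp [hX, fpsMul, hV0]
  have htr : ∀ j ≤ N, trunc N X j = X j := by
    intro j hj
    unfold trunc
    rcases Nat.eq_zero_or_pos j with h0 | h1
    · subst h0; simp [hX0]
    · rw [if_pos ⟨h1, hj⟩]
  have hfull : fpsMul (fpsMul WL X) WR = V := by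
    rw [hX, ← fpsMul_assoc WL, ← fpsMul_assoc WL, hL1, one_fpsMul,
      fpsMul_assoc, hR2, fpsMul_one]
  set Y := trunc N X with hY
  funext i
  show V i = trunc N (fpsMul (fpsMul WL Y) WR) i
  unfold trunc
  by_cases hi : 1 ≤ i ∧ i ≤ N
  · rw [if_pos hi]
    have h1 : fpsMul (fpsMul WL (trunc N X)) WR i = fpsMul (fpsMul WL X) WR i := by
      apply fpsMul_congr_left
      intro j hj
      apply fpsMul_congr_right
      intro k hk
      exact htr k (by omega)
    rw [h1, hfull]
  · rw [if_neg hi]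
    rcases Nat.eq_zero_or_pos i with h0 | h1
    · subst h0; exact hV0
    · exact hVN i (by omega)

/-- Recovery identity of Lemma 5: for mutually inverse causal series `W_L, W_L⁻¹`
and `W_R, W_R⁻¹` with invertible leading coefficients, if `V` is supported on
degrees `1..N` and `G = P_{1..N}(W_L⁻¹ V W_R⁻¹)`, then `V = P_{1..N}(W_L G W_R)`;
in particular `V ↦ G` is a bijection of the degree-`(1..N)` supported series. -/
theorem stmt_17 {p q N : ℕ}
    (WL WLinv : ℕ → Matrix (Fin p) (Fin p) ℂ)
    (WR WRinv : ℕ → Matrix (Fin q) (Fin q) ℂ)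
    (hWL0 : IsUnit (WL 0)) (hWR0 : IsUnit (WR 0))
    (hL1 : fpsMul WL WLinv = fpsOne p) (hL2 : fpsMul WLinv WL = fpsOne p)
    (hR1 : fpsMul WR WRinv = fpsOne q) (hR2 : fpsMul WRinv WR = fpsOne q)
    (V : ℕ → Matrix (Fin p) (Fin q) ℂ)
    (hV0 : V 0 = 0) (hVN : ∀ i, N < i → V i = 0) :
    V = trunc N (fpsMul (fpsMul WL (trunc N (fpsMul (fpsMul WLinv V) WRinv))) WR) ∧
    ∀ G : ℕ → Matrix (Fin p) (Fin q) ℂ,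
      G 0 = 0 → (∀ i, N < i → G i = 0) →
      ∃! V' : ℕ → Matrix (Fin p) (Fin q) ℂ,
        (V' 0 = 0 ∧ ∀ i, N < i → V' i = 0) ∧
        trunc N (fpsMul (fpsMul WLinv V') WRinv) = G := by
  refine ⟨key WL WLinv WR WRinv hL1 hR2 V hV0 hVN, ?_⟩
  intro G hG0 hGN
  refine ⟨trunc N (fpsMul (fpsMul WL G) WR), ⟨⟨?_, ?_⟩, ?_⟩, ?_⟩
  · simp [trunc]
  · intro i hi; simp [trunc]; omega
  · exact (key WLinv WL WRinv WR hL2 hR1 G hG0 hGN).symm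
  · rintro V'' ⟨⟨h0, hN⟩, hG⟩
    have := key WL WLinv WR WRinv hL1 hR2 V'' h0 hN
    rw [hG] at this
    exact this
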